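/- arXiv:1912.07909 — 3 statements merged into one kernel-verified Lean document; each statement's English description precedes it below -/
import Mathlib

section
/- Let $Z=(\zeta_1,\dots,\zeta_{N_Z})$ with $\zeta_1=0$, $\zeta_{N_Z}=1$ be a strictly increasing vector of breakpoints with grid size $h:=\max_i (\zeta_{i+1}-\zeta_i)$. Then for every $\widetilde h \ge 3h$, there exists a subsequence $\widetilde Z=(\widetilde\zeta_1,\dots,\widetilde\zeta_{N_{\widetilde Z}})$ of $Z$ with $\widetilde\zeta_1=0$, $\widetilde\zeta_{N_{\widetilde Z}}=1$, such that $\min\{1,\tfrac13\widetilde h\} \le \widetilde\zeta_{i+1}-\widetilde\zeta_i \le \widetilde h$ for all $i=1,\dots,N_{\widetilde Z}-1$. -/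
/-!
Put `δ = h̃ / 3`. If `h̃ ≥ 1`, the single jump from `0` to `1` works. Otherwise every gap of `Z`
is at most `h ≤ δ`, and a greedy walk does the job: from the current breakpoint `a`, if the
remaining distance to `1` is at most `3δ` jump straight to `1`; else jump to the first
breakpoint `k` with `ζ k - ζ a > δ`. As gaps are at most `δ`, this jump is at most `2δ`, so more
than `δ` remains to be covered and the invariant "remaining distance `≥ δ`" persists.
-/

open Set

def GapChain {α : Type*} [Preorder α] (ζ : α → ℝ) (s : Set ℝ) (a b : α) : Prop :=
  ∃ (m : ℕ) (σ : Fin (m + 1) → α), StrictMono σ ∧ σ 0 = a ∧ σ (Fin.last m) = b ∧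
    ∀ i : Fin m, ζ (σ i.succ) - ζ (σ i.castSucc) ∈ s

namespace GapChain

variable {α β : Type*} [Preorder α] [Preorder β] {ζ : α → ℝ} {s : Set ℝ} {a b c : α}

theorem refl (ζ : α → ℝ) (s : Set ℝ) (a : α) : GapChain ζ s a a :=
  ⟨0, fun _ => a, Fin.strictMono_iff_lt_succ.2 fun i => i.elim0, rfl, rfl, fun i => i.elim0⟩

theorem cons (hab : a < b) (hs : ζ b - ζ a ∈ s) (hbc : GapChain ζ s b c) :
    GapChain ζ s a c := by
  obtain ⟨m, σ, hσ, hσ0, hσlast, hσs⟩ := hbc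
  refine ⟨m + 1, Fin.cons a σ, ?_, rfl, by rw [← Fin.succ_last, Fin.cons_succ, hσlast], ?_⟩
  · refine Fin.strictMono_iff_lt_succ.2 fun i => ?_
    cases i using Fin.cases with
    | zero => simpa [hσ0] using hab
    | succ j => simpa [← Fin.succ_castSucc] using hσ (Fin.castSucc_lt_succ (i := j))
  · intro i
    cases i using Fin.cases with
    | zero => simpa [hσ0] using hs
    | succ j => simpa [← Fin.succ_castSucc] using hσs j

theorem map {ζ : β → ℝ} {f : α → β} (hf : StrictMonoOn f (Icc a b))
    (hab : GapChain (ζ ∘ f) s a b) : GapChain ζ s (f a) (f b) := by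
  obtain ⟨m, σ, hσ, hσ0, hσlast, hσs⟩ := hab
  have hσab (i : Fin (m + 1)) : σ i ∈ Icc a b :=
    ⟨hσ0 ▸ hσ.monotone (Fin.zero_le i), hσlast ▸ hσ.monotone (Fin.le_last i)⟩
  exact ⟨m, f ∘ σ, fun i j hij => hf (hσab i) (hσab j) (hσ hij),
    by simp [hσ0], by simp [hσlast], hσs⟩

end GapChain

theorem Nat.exists_le_lt_succ_of_le_of_lt (ζ : ℕ → ℝ) {a b : ℕ} {c : ℝ} (hab : a ≤ b)
    (ha : ζ a ≤ c) (hb : c < ζ b) : ∃ k, a ≤ k ∧ k < b ∧ ζ k ≤ c ∧ c < ζ (k + 1) := by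
  classical
  have hk : ζ (Nat.findGreatest (ζ · ≤ c) b) ≤ c := Nat.findGreatest_spec (P := (ζ · ≤ c)) hab ha
  have hkb : Nat.findGreatest (ζ · ≤ c) b < b :=
    (Nat.findGreatest_le b).lt_of_ne fun hkb => hb.not_ge (hkb ▸ hk)
  exact ⟨_, Nat.le_findGreatest hab ha, hkb, hk,
    not_le.1 <| Nat.findGreatest_is_greatest (Nat.lt_succ_self _) hkb⟩

theorem Nat.gapChain_of_sub_le {ζ : ℕ → ℝ} {δ : ℝ} (hδ : 0 < δ)
    (hgap : ∀ i, ζ (i + 1) - ζ i ≤ δ) {a b : ℕ} (hab : a ≤ b) (hδab : δ ≤ ζ b - ζ a) :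
    GapChain ζ (Icc δ (3 * δ)) a b := by
  have hlt : a < b := hab.lt_of_ne fun h => by subst h; linarith
  by_cases hshort : ζ b - ζ a ≤ 3 * δ
  · exact (GapChain.refl _ _ b).cons hlt ⟨hδab, hshort⟩
  obtain ⟨k, hak, hkb, hkc, hck⟩ :=
    Nat.exists_le_lt_succ_of_le_of_lt ζ hab (c := ζ a + δ) (by linarith) (by linarith)
  have hstep := hgap k
  have hrest : GapChain ζ (Icc δ (3 * δ)) (k + 1) b :=
    gapChain_of_sub_le hδ hgap hkb (by linarith)
  exact hrest.cons (by omega) ⟨by linarith, by linarith⟩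
termination_by b - a

theorem Fin.gapChain_of_sub_le {n : ℕ} {ζ : Fin (n + 1) → ℝ} {δ : ℝ} (hδ : 0 < δ)
    (hgap : ∀ i : Fin n, ζ i.succ - ζ i.castSucc ≤ δ) (hδζ : δ ≤ ζ (Fin.last n) - ζ 0) :
    GapChain ζ (Icc δ (3 * δ)) 0 (Fin.last n) := by
  have hclamp : StrictMonoOn (Fin.clamp · n) (Icc 0 n) := fun i hi j hj hij => by
    simp [Fin.lt_def, Fin.clamp, min_eq_left hi.2, min_eq_left hj.2, hij]
  have hgap' (i : ℕ) : ζ (Fin.clamp (i + 1) n) - ζ (Fin.clamp i n) ≤ δ := by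
    rcases lt_or_ge i n with hi | hi
    · simpa [Fin.ext_iff, Fin.clamp, min_eq_left (Nat.succ_le_of_lt hi), min_eq_left hi.le]
        using hgap ⟨i, hi⟩
    · simp [Fin.clamp_eq_last _ _ hi, Fin.clamp_eq_last _ _ (hi.trans i.le_succ), hδ.le]
  have hclamp0 : Fin.clamp 0 n = 0 := rfl
  have := (Nat.gapChain_of_sub_le hδ hgap' (Nat.zero_le n)
    (by simpa [Fin.clamp_eq_last, hclamp0] using hδζ)).map hclamp
  rwa [Fin.clamp_eq_last n n le_rfl, hclamp0] at this

theorem Fin.pos_of_sub_le_of_lt {n : ℕ} {ζ : Fin (n + 1) → ℝ} {h : ℝ}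
    (hgap : ∀ i : Fin n, ζ i.succ - ζ i.castSucc ≤ h) (hζ : ζ 0 < ζ (Fin.last n)) : 0 < h := by
  by_contra! hh
  have : Antitone ζ := Fin.antitone_iff_succ_le.2 fun i => by linarith [hgap i]
  exact (this (Fin.zero_le _)).not_gt hζ

theorem stmt_0_general (n : ℕ) (ζ : Fin (n + 1) → ℝ)
    (hfirst : ζ 0 = 0) (hlast : ζ (Fin.last n) = 1) (h : ℝ)
    (hgrid : IsGreatest (Set.range fun i : Fin n => ζ i.succ - ζ i.castSucc) h)
    (ht : ℝ) (hht : 3 * h ≤ ht) :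
    ∃ (m : ℕ) (σ : Fin (m + 1) → Fin (n + 1)), StrictMono σ ∧
      σ 0 = 0 ∧ σ (Fin.last m) = Fin.last n ∧
      ∀ i : Fin m,
        min 1 (ht / 3) ≤ ζ (σ i.succ) - ζ (σ i.castSucc) ∧
        ζ (σ i.succ) - ζ (σ i.castSucc) ≤ ht := by
  have hgap (i : Fin n) : ζ i.succ - ζ i.castSucc ≤ h := hgrid.2 ⟨i, rfl⟩
  have hζ : ζ 0 < ζ (Fin.last n) := by rw [hfirst, hlast]; exact one_pos
  have hh : 0 < h := Fin.pos_of_sub_le_of_lt hgap hζ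
  suffices GapChain ζ (Icc (min 1 (ht / 3)) ht) 0 (Fin.last n) from this
  rcases le_or_gt 1 ht with hone | hone
  · have h0 : (0 : Fin (n + 1)) < Fin.last n := lt_of_le_of_ne (Fin.zero_le _) fun h0 => by
      simp [h0] at hζ
    exact (GapChain.refl ζ _ _).cons h0 (by simp [hfirst, hlast, hone])
  · have := Fin.gapChain_of_sub_le (δ := ht / 3) (by linarith)
      (fun i => (hgap i).trans (by linarith)) (by linarith)
    rw [min_eq_right (by linarith)]
    rwa [mul_div_cancel₀ ht three_ne_zero] at this

/-- existence of a coarsened subsequence of breakpoints with gaps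
between `min 1 (h̃/3)` and `h̃`, for any `h̃ ≥ 3h`, where `h` is the grid size
(maximal gap) of the original breakpoint vector. -/
theorem stmt_0 (n : ℕ) (ζ : Fin (n + 1) → ℝ) (hmono : StrictMono ζ)
    (hfirst : ζ 0 = 0) (hlast : ζ (Fin.last n) = 1) (h : ℝ)
    (hgrid : IsGreatest (Set.range fun i : Fin n => ζ i.succ - ζ i.castSucc) h)
    (ht : ℝ) (hht : 3 * h ≤ ht) :
    ∃ (m : ℕ) (σ : Fin (m + 1) → Fin (n + 1)), StrictMono σ ∧
      σ 0 = 0 ∧ σ (Fin.last m) = Fin.last n ∧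
      ∀ i : Fin m,
        min 1 (ht / 3) ≤ ζ (σ i.succ) - ζ (σ i.castSucc) ∧
        ζ (σ i.succ) - ζ (σ i.castSucc) ≤ ht :=
  stmt_0_general n ζ hfirst hlast h hgrid ht hht
end

section
/- Let $H$ be a Hilbert space with closed nested subspaces $\{0\}=W_0 \subseteq W_1 \subseteq \cdots \subseteq W_{M}$, let $Q_\ell$ denote the orthogonal projection onto $W_\ell$, and let $h_\ell = 4^{M-\ell} h$ for some $h>0$. Then there is an absolute constant $c>0$ such that for every $w \in W_M$ and every decomposition $w = \sum_{\ell=1}^{M} w_\ell$ with $w_\ell \in W_\ell$: $\sum_{n=1}^{M} h_n^{-2} \|(Q_n - Q_{n-1}) w\|_H^2 \le c \sum_{\ell=1}^{M} h_\ell^{-2} \|w_\ell\|_H^2$. -/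
/-!
For `ℓ < n` the component `w ℓ` lies in `W (n - 1) ⊆ W n`, so both projections fix it and
`(Q n - Q (n - 1)) w = ∑_{ℓ ≥ n} (Q n - Q (n - 1)) (w ℓ)`, of norm at most `2 ∑_{ℓ ≥ n} ‖w ℓ‖`.
The weights `h_n⁻²` grow by the factor `16` per level, so what remains is a discrete Hardy
inequality for tail sums: Cauchy–Schwarz with the weights `4^{-(ℓ - n)}` and two geometric series
give the constant `4 · (4/3)² = 64/9`.
-/

open Finset

section OrthogonalProjection

variable {𝕜 E : Type*} [RCLike 𝕜] [NormedAddCommGroup E] [InnerProductSpace 𝕜 E]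

def IsOrthogonalProjectionOnto (K : Submodule 𝕜 E) (P : E →L[𝕜] E) : Prop :=
  ∀ x, P x ∈ K ∧ x - P x ∈ Kᗮ

namespace IsOrthogonalProjectionOnto

variable {K K' : Submodule 𝕜 E} {P P' : E →L[𝕜] E}

theorem apply_eq_self (hP : IsOrthogonalProjectionOnto K P) {x : E} (hx : x ∈ K) : P x = x := by
  have hK : x - P x ∈ K := K.sub_mem hx (hP x).1
  rw [eq_comm, ← sub_eq_zero]
  exact (Submodule.mem_bot 𝕜).1 (K.orthogonal_disjoint.le_bot ⟨hK, (hP x).2⟩)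

theorem norm_apply_le (hP : IsOrthogonalProjectionOnto K P) (x : E) : ‖P x‖ ≤ ‖x‖ := by
  have hpyth := norm_add_sq_eq_norm_sq_add_norm_sq_of_inner_eq_zero (P x) (x - P x)
    (Submodule.inner_right_of_mem_orthogonal (hP x).1 (hP x).2)
  rw [add_sub_cancel] at hpyth
  exact le_of_sq_le_sq (by nlinarith [sq_nonneg ‖x - P x‖]) (norm_nonneg x)

theorem norm_sub_apply_sum_le (hP : IsOrthogonalProjectionOnto K P)
    (hP' : IsOrthogonalProjectionOnto K' P') (hKK' : K ≤ K') {ι : Type*} {s t : Finset ι}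
    (hts : t ⊆ s) {v : ι → E} (hv : ∀ i ∈ s, i ∉ t → v i ∈ K) :
    ‖P' (∑ i ∈ s, v i) - P (∑ i ∈ s, v i)‖ ≤ 2 * ∑ i ∈ t, ‖v i‖ := by
  have hkill : ∀ i ∈ s, i ∉ t → P' (v i) - P (v i) = 0 := fun i hi hit ↦ by
    rw [hP'.apply_eq_self (hKK' (hv i hi hit)), hP.apply_eq_self (hv i hi hit), sub_self]
  rw [map_sum, map_sum, ← sum_sub_distrib, ← sum_subset hts hkill, mul_sum]
  refine (norm_sum_le _ _).trans (sum_le_sum fun i _ ↦ ?_)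
  calc ‖P' (v i) - P (v i)‖ ≤ ‖P' (v i)‖ + ‖P (v i)‖ := norm_sub_le _ _
    _ ≤ 2 * ‖v i‖ := by linarith [hP'.norm_apply_le (v i), hP.norm_apply_le (v i)]

end IsOrthogonalProjectionOnto

theorem norm_apply_sub_apply_pred_le {M n : ℕ} {W : ℕ → Submodule 𝕜 E} {Q : ℕ → E →L[𝕜] E}
    (hW : MonotoneOn W (Set.Iic M)) (hQ : ∀ n ≤ M, IsOrthogonalProjectionOnto (W n) (Q n))
    (hn : n ∈ Icc 1 M) {wl : ℕ → E} (hwl : ∀ ℓ ∈ Icc 1 M, wl ℓ ∈ W ℓ) :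
    ‖Q n (∑ ℓ ∈ Icc 1 M, wl ℓ) - Q (n - 1) (∑ ℓ ∈ Icc 1 M, wl ℓ)‖ ≤
      2 * ∑ ℓ ∈ Icc n M, ‖wl ℓ‖ := by
  rw [mem_Icc] at hn
  have hlow : ∀ ℓ ∈ Icc 1 M, ℓ ∉ Icc n M → wl ℓ ∈ W (n - 1) := fun ℓ hℓ hℓn ↦ by
    simp only [mem_Icc] at hℓ hℓn
    exact hW (by simp only [Set.mem_Iic]; omega) (by simp only [Set.mem_Iic]; omega)
      (by omega) (hwl ℓ (mem_Icc.2 hℓ))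
  exact (hQ (n - 1) (by omega)).norm_sub_apply_sum_le (hQ n hn.2)
    (hW (by simp only [Set.mem_Iic]; omega) (Set.mem_Iic.2 hn.2) (by omega))
    (Icc_subset_Icc_left hn.1) hlow

end OrthogonalProjection

theorem sum_pow_comp_le_inv_one_sub {ι : Type*} {θ : ℝ} (hθ₀ : 0 ≤ θ) (hθ₁ : θ < 1)
    (s : Finset ι) {e : ι → ℕ} (he : Set.InjOn e s) :
    ∑ i ∈ s, θ ^ e i ≤ (1 - θ)⁻¹ := by
  rw [← sum_image (f := (θ ^ ·)) he, ← tsum_geometric_of_lt_one hθ₀ hθ₁]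
  exact (summable_geometric_of_lt_one hθ₀ hθ₁).sum_le_tsum _ fun k _ ↦ pow_nonneg hθ₀ k

theorem sq_sum_Icc_le {θ : ℝ} (hθ₀ : 0 < θ) (hθ₁ : θ < 1) (a : ℕ → ℝ) (n M : ℕ) :
    (∑ ℓ ∈ Icc n M, a ℓ) ^ 2 ≤ (1 - θ)⁻¹ * ∑ ℓ ∈ Icc n M, a ℓ ^ 2 / θ ^ (ℓ - n) := by
  have hgeom : ∑ ℓ ∈ Icc n M, θ ^ (ℓ - n) ≤ (1 - θ)⁻¹ :=
    sum_pow_comp_le_inv_one_sub hθ₀.le hθ₁ _ fun ℓ hℓ ℓ' hℓ' h ↦ by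
      simp only [coe_Icc, Set.mem_Icc] at hℓ hℓ' h; omega
  have hcs := sum_sq_le_sum_mul_sum_of_sq_le_mul (Icc n M) (r := a)
    (f := fun ℓ ↦ θ ^ (ℓ - n)) (g := fun ℓ ↦ a ℓ ^ 2 / θ ^ (ℓ - n))
    (fun ℓ _ ↦ by positivity) (fun ℓ _ ↦ by positivity)
    (fun ℓ _ ↦ (mul_div_cancel₀ _ (pow_pos hθ₀ _).ne').ge)
  exact hcs.trans (by gcongr)

theorem sum_mul_sq_sum_Icc_le {θ : ℝ} (hθ₀ : 0 < θ) (hθ₁ : θ < 1) {ω : ℕ → ℝ}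
    (hω : ∀ n, 0 ≤ ω n) {m M : ℕ}
    (hωθ : ∀ n ℓ, m ≤ n → n ≤ ℓ → ℓ ≤ M → ω n ≤ θ ^ (2 * (ℓ - n)) * ω ℓ) (a : ℕ → ℝ) :
    ∑ n ∈ Icc m M, ω n * (∑ ℓ ∈ Icc n M, a ℓ) ^ 2 ≤
      (1 - θ)⁻¹ ^ 2 * ∑ ℓ ∈ Icc m M, ω ℓ * a ℓ ^ 2 := by
  have hgeom : ∀ ℓ, ∑ n ∈ Icc m ℓ, θ ^ (ℓ - n) ≤ (1 - θ)⁻¹ := fun ℓ ↦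
    sum_pow_comp_le_inv_one_sub hθ₀.le hθ₁ _ fun n hn n' hn' h ↦ by
      simp only [coe_Icc, Set.mem_Icc] at hn hn' h; omega
  have hterm : ∀ n ∈ Icc m M, ∀ ℓ ∈ Icc n M,
      ω n * (a ℓ ^ 2 / θ ^ (ℓ - n)) ≤ θ ^ (ℓ - n) * (ω ℓ * a ℓ ^ 2) := by
    intro n hn ℓ hℓ
    rw [mem_Icc] at hn hℓ
    rw [mul_div_assoc', div_le_iff₀ (pow_pos hθ₀ _)]
    calc ω n * a ℓ ^ 2 ≤ θ ^ (2 * (ℓ - n)) * ω ℓ * a ℓ ^ 2 := by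
          gcongr; exact hωθ n ℓ hn.1 hℓ.1 hℓ.2
      _ = θ ^ (ℓ - n) * (ω ℓ * a ℓ ^ 2) * θ ^ (ℓ - n) := by ring
  calc ∑ n ∈ Icc m M, ω n * (∑ ℓ ∈ Icc n M, a ℓ) ^ 2
      ≤ ∑ n ∈ Icc m M, ω n * ((1 - θ)⁻¹ * ∑ ℓ ∈ Icc n M, a ℓ ^ 2 / θ ^ (ℓ - n)) := by
        gcongr with n; exacts [hω n, sq_sum_Icc_le hθ₀ hθ₁ a n M]
    _ = (1 - θ)⁻¹ * ∑ n ∈ Icc m M, ∑ ℓ ∈ Icc n M, ω n * (a ℓ ^ 2 / θ ^ (ℓ - n)) := by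
        simp only [mul_sum, mul_left_comm]
    _ ≤ (1 - θ)⁻¹ * ∑ n ∈ Icc m M, ∑ ℓ ∈ Icc n M, θ ^ (ℓ - n) * (ω ℓ * a ℓ ^ 2) := by
        gcongr (1 - θ)⁻¹ * ?_
        exact sum_le_sum fun n hn ↦ sum_le_sum (hterm n hn)
    _ = (1 - θ)⁻¹ * ∑ ℓ ∈ Icc m M, (∑ n ∈ Icc m ℓ, θ ^ (ℓ - n)) * (ω ℓ * a ℓ ^ 2) := by
        simp only [sum_mul]
        congr 1
        exact sum_comm' fun n ℓ ↦ by simp only [mem_Icc]; omega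
    _ ≤ (1 - θ)⁻¹ * ∑ ℓ ∈ Icc m M, (1 - θ)⁻¹ * (ω ℓ * a ℓ ^ 2) := by
        gcongr with ℓ
        · exact mul_nonneg (hω ℓ) (sq_nonneg _)
        · exact hgeom ℓ
    _ = (1 - θ)⁻¹ ^ 2 * ∑ ℓ ∈ Icc m M, ω ℓ * a ℓ ^ 2 := by
        rw [← mul_sum, ← mul_assoc, sq]

theorem inv_sq_four_pow_sub_mul (h : ℝ) {M n ℓ : ℕ} (hnℓ : n ≤ ℓ) (hℓM : ℓ ≤ M) :
    (((4:ℝ) ^ (M - n) * h) ^ 2)⁻¹ = (4:ℝ)⁻¹ ^ (2 * (ℓ - n)) * (((4:ℝ) ^ (M - ℓ) * h) ^ 2)⁻¹ := by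
  rw [show M - n = (M - ℓ) + (ℓ - n) by omega]
  simp only [pow_add, mul_pow, mul_inv, inv_pow, ← pow_mul]
  ring

/-- the orthogonal multilevel decomposition almost minimizes the
weighted sum over all decompositions, with an absolute constant. -/
theorem stmt_7 : ∃ c : ℝ, 0 < c ∧
    ∀ (H : Type) [NormedAddCommGroup H] [InnerProductSpace ℝ H]
      (M : ℕ) (W : ℕ → Submodule ℝ H),
      (∀ n, IsClosed (W n : Set H)) → W 0 = ⊥ →
      (∀ n < M, W n ≤ W (n + 1)) →
      ∀ (Q : ℕ → H →L[ℝ] H),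
      (∀ n ≤ M, ∀ x : H, Q n x ∈ W n ∧ x - Q n x ∈ (W n)ᗮ) →
      ∀ h : ℝ, 0 < h →
      ∀ w ∈ W M, ∀ wl : ℕ → H,
        (∀ ℓ ∈ Finset.Icc 1 M, wl ℓ ∈ W ℓ) →
        w = ∑ ℓ ∈ Finset.Icc 1 M, wl ℓ →
        ∑ n ∈ Finset.Icc 1 M, (((4:ℝ) ^ (M - n) * h) ^ 2)⁻¹ * ‖Q n w - Q (n - 1) w‖ ^ 2 ≤
          c * ∑ ℓ ∈ Finset.Icc 1 M, (((4:ℝ) ^ (M - ℓ) * h) ^ 2)⁻¹ * ‖wl ℓ‖ ^ 2 := by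
  refine ⟨64 / 9, by norm_num, ?_⟩
  intro H _ _ M W _ _ hnest Q hQ h _ w _ wl hwl hw
  have hW : MonotoneOn W (Set.Iic M) := monotoneOn_of_le_succ Set.ordConnected_Iic
    fun n _ _ hn ↦ hnest n (Order.succ_le_iff.1 hn)
  subst hw
  calc ∑ n ∈ Icc 1 M, (((4:ℝ) ^ (M - n) * h) ^ 2)⁻¹ *
        ‖Q n (∑ ℓ ∈ Icc 1 M, wl ℓ) - Q (n - 1) (∑ ℓ ∈ Icc 1 M, wl ℓ)‖ ^ 2
      ≤ ∑ n ∈ Icc 1 M, (((4:ℝ) ^ (M - n) * h) ^ 2)⁻¹ * (2 * ∑ ℓ ∈ Icc n M, ‖wl ℓ‖) ^ 2 := by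
        gcongr with n hn
        exact norm_apply_sub_apply_pred_le hW hQ hn hwl
    _ = 4 * ∑ n ∈ Icc 1 M, (((4:ℝ) ^ (M - n) * h) ^ 2)⁻¹ * (∑ ℓ ∈ Icc n M, ‖wl ℓ‖) ^ 2 := by
        rw [mul_sum]; congr 1 with n; ring
    _ ≤ 4 * ((1 - 4⁻¹)⁻¹ ^ 2 *
          ∑ ℓ ∈ Icc 1 M, (((4:ℝ) ^ (M - ℓ) * h) ^ 2)⁻¹ * ‖wl ℓ‖ ^ 2) := by
        gcongr
        exact sum_mul_sq_sum_Icc_le (by norm_num) (by norm_num) (fun n ↦ by positivity)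
          (fun n ℓ _ hnℓ hℓM ↦ (inv_sq_four_pow_sub_mul h hnℓ hℓM).le) _
    _ = 64 / 9 * ∑ ℓ ∈ Icc 1 M, (((4:ℝ) ^ (M - ℓ) * h) ^ 2)⁻¹ * ‖wl ℓ‖ ^ 2 := by
        norm_num [← mul_assoc]
end

section
/- Let $u \in H^1(\widehat\Omega)$ on $\widehat\Omega = (0,1)^2$ be continuous, let $x \in [0,1/2]^2$, and for $r > 0$ let $C_r(x) := \{\xi \in \mathbb{R}^2 : \|\xi - x\|_2 \le r,\ \xi_1 \ge x_1,\ \xi_2 \ge x_2\}$ be the quarter-cone at $x$. Suppose $u$ is continuously differentiable on $C_{1/2}(x)$. Then for every $\epsilon \in (0, 1/4)$: $u(x)^2 \le c\Big(\|u\|_{L_2(C_{1/2}(x)\setminus C_{1/4}(x))}^2 + \epsilon^2 \|\nabla u\|_{L_\infty(C_\epsilon(x))}^2 + (-\log\epsilon)\, |u|_{H^1(C_{1/2}(x))}^2\Big)$ for an absolute constant $c > 0$. -/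
open MeasureTheory

/-- The quarter-cone `C_r(x)` with vertex `x`. -/
def quarterCone (x : EuclideanSpace ℝ (Fin 2)) (r : ℝ) : Set (EuclideanSpace ℝ (Fin 2)) :=
  {ξ | ‖ξ - x‖ ≤ r ∧ x 0 ≤ ξ 0 ∧ x 1 ≤ ξ 1}

/-!
Along the ray `ρ ↦ x + ρ (cos θ, sin θ)` the fundamental theorem of calculus writes `u x` as the
value at radius `r` minus the integral of the radial derivative. The part of that integral over
`(0, ε)` is at most `ε sup ‖∇u‖`; by the weighted Cauchy–Schwarz inequality the square of the part
over `(ε, r)` is at most `log (r / ε) ∫ ρ ‖∇u‖² dρ`. Averaging over `r ∈ (1/4, 1/2]` and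
`θ ∈ [0, π/2]` against `r dr dθ`, which is Lebesgue measure on the cone in polar coordinates,
turns the value term into the `L²` norm on the annulus and the derivative term into the `H¹`
seminorm on the cone.
-/

open Real Set
open scoped ENNReal

local notation "ℝ²" => EuclideanSpace ℝ (Fin 2)

theorem sq_intervalIntegral_le_log_mul_intervalIntegral {f : ℝ → ℝ} {a b : ℝ} (ha : 0 < a)
    (hab : a ≤ b) (hf : ContinuousOn f (Icc a b)) :
    (∫ t in a..b, f t) ^ 2 ≤ log (b / a) * ∫ t in a..b, t * f t ^ 2 := by
  have hpos : ∀ t ∈ uIcc a b, 0 < t := fun t ht =>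
    ha.trans_le (by rw [uIcc_of_le hab] at ht; exact ht.1)
  have hf' : ContinuousOn f (uIcc a b) := by rwa [uIcc_of_le hab]
  have hinv : ContinuousOn (fun t : ℝ => t⁻¹) (uIcc a b) :=
    continuousOn_inv₀.mono fun t ht => (hpos t ht).ne'
  -- `∫ t (f t - l / t)²` is a nonnegative quadratic polynomial in `l`: its discriminant is `≤ 0`.
  have hquad : ∀ l : ℝ, 0 ≤ log (b / a) * (l * l) + (-2 * ∫ t in a..b, f t) * l
      + ∫ t in a..b, t * f t ^ 2 := by
    intro l
    have h0 : 0 ≤ ∫ t in a..b, t * (f t - l / t) ^ 2 :=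
      intervalIntegral.integral_nonneg hab fun t ht =>
        mul_nonneg (ha.trans_le ht.1).le (sq_nonneg _)
    have hexp : ∫ t in a..b, t * (f t - l / t) ^ 2
        = ∫ t in a..b, (l * l * t⁻¹ + -2 * l * f t + t * f t ^ 2) := by
      refine intervalIntegral.integral_congr fun t ht => ?_
      have := (hpos t ht).ne'
      field_simp
      ring
    rw [hexp, intervalIntegral.integral_add, intervalIntegral.integral_add,
      intervalIntegral.integral_const_mul, intervalIntegral.integral_const_mul,
      integral_inv_of_pos ha (ha.trans_le hab)] at h0
    · linarith
    all_goals exact ContinuousOn.intervalIntegrable (by fun_prop)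
  have := discrim_le_zero hquad
  unfold discrim at this
  linarith

theorem sq_apply_zero_le_of_hasDerivAt {v v' : ℝ → ℝ} {ε r M : ℝ} (hε : 0 < ε) (hεr : ε ≤ r)
    (hv : ∀ t ∈ Icc 0 r, HasDerivAt v (v' t) t) (hv' : ContinuousOn v' (Icc 0 r))
    (hM : ∀ t ∈ Icc 0 ε, |v' t| ≤ M) :
    v 0 ^ 2 ≤ 3 * (v r ^ 2 + (ε * M) ^ 2 + log (r / ε) * ∫ t in ε..r, t * v' t ^ 2) := by
  have hint : ∀ a b, 0 ≤ a → a ≤ b → b ≤ r → IntervalIntegrable v' volume a b :=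
    fun a b h0 hab hb =>
      (hv'.mono (by rw [uIcc_of_le hab]; exact Icc_subset_Icc h0 hb)).intervalIntegrable
  have hftc : v r - v 0 = (∫ t in 0..ε, v' t) + ∫ t in ε..r, v' t := by
    rw [intervalIntegral.integral_add_adjacent_intervals (hint 0 ε le_rfl hε.le hεr)
      (hint ε r hε.le hεr le_rfl), intervalIntegral.integral_eq_sub_of_hasDerivAt
      (fun t ht => hv t (by rwa [uIcc_of_le (hε.le.trans hεr)] at ht))
      (hint 0 r le_rfl (hε.le.trans hεr) le_rfl)]
  have hnear : |∫ t in 0..ε, v' t| ≤ ε * M := by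
    have := intervalIntegral.norm_integral_le_of_norm_le_const (a := 0) (b := ε) (f := v') (C := M)
      fun t ht => hM t (by rw [uIoc_of_le hε.le] at ht; exact Ioc_subset_Icc_self ht)
    rwa [sub_zero, abs_of_pos hε, mul_comm] at this
  have hfar := sq_intervalIntegral_le_log_mul_intervalIntegral hε hεr
    (hv'.mono (Icc_subset_Icc hε.le le_rfl))
  have hv0 : v 0 = v r - (∫ t in 0..ε, v' t) - ∫ t in ε..r, v' t := by linarith
  rw [hv0]
  -- `(a - b - c)² ≤ 3 (a² + b² + c²)`
  nlinarith [sq_le_sq' (neg_le_of_abs_le hnear) (le_of_abs_le hnear),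
    sq_nonneg (v r + (∫ t in 0..ε, v' t)), sq_nonneg (v r + ∫ t in ε..r, v' t),
    sq_nonneg ((∫ t in 0..ε, v' t) - ∫ t in ε..r, v' t)]

theorem log_div_mul_intervalIntegral_le {g w : ℝ → ℝ} {ε r R : ℝ} (hε : 0 < ε) (hεr : ε ≤ r)
    (hrR : r ≤ R) (hg : ContinuousOn g (Icc ε R)) (hw : ContinuousOn w (Icc ε R))
    (hgw : ∀ t ∈ Icc ε R, |g t| ≤ w t) :
    log (r / ε) * ∫ t in ε..r, t * g t ^ 2 ≤ log (R / ε) * ∫ t in ε..R, t * w t ^ 2 := by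
  have hII : ∀ {h : ℝ → ℝ} {b}, ContinuousOn h (Icc ε R) → ε ≤ b → b ≤ R →
      IntervalIntegrable (fun t => t * h t ^ 2) volume ε b := fun hh h1 h2 =>
    ((continuousOn_id.mul (hh.pow 2)).mono
      (by rw [uIcc_of_le h1]; exact Icc_subset_Icc le_rfl h2)).intervalIntegrable
  have hgw_sq : ∀ t ∈ Icc ε r, t * g t ^ 2 ≤ t * w t ^ 2 := fun t ht =>
    mul_le_mul_of_nonneg_left (sq_le_sq.2 ((hgw t ⟨ht.1, ht.2.trans hrR⟩).trans (le_abs_self _)))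
      (hε.le.trans ht.1)
  have hgr : ∫ t in ε..r, t * g t ^ 2 ≤ ∫ t in ε..R, t * w t ^ 2 :=
    (intervalIntegral.integral_mono_on hεr (hII hg hεr hrR) (hII hw hεr hrR) hgw_sq).trans
      (intervalIntegral.integral_mono_interval le_rfl hεr hrR
        (ae_restrict_of_forall_mem measurableSet_Ioc fun t ht =>
          mul_nonneg (hε.le.trans ht.1.le) (sq_nonneg _))
        (hII hw (hεr.trans hrR) le_rfl))
  exact mul_le_mul (log_le_log (div_pos (hε.trans_le hεr) hε) (by gcongr)) hgr
    (intervalIntegral.integral_nonneg hεr fun t ht => mul_nonneg (hε.le.trans ht.1) (sq_nonneg _))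
    (log_nonneg ((one_le_div hε).2 (hεr.trans hrR)))

theorem ofReal_intervalIntegral_eq_setLIntegral {f : ℝ → ℝ} {a b : ℝ} (hab : a ≤ b)
    (hf : IntervalIntegrable f volume a b) (hf0 : ∀ t ∈ Ioc a b, 0 ≤ f t) :
    ENNReal.ofReal (∫ t in a..b, f t) = ∫⁻ t in Ioc a b, ENNReal.ofReal (f t) := by
  rw [intervalIntegral.integral_of_le hab,
    ofReal_integral_eq_lintegral_ofReal hf.1 (ae_restrict_of_forall_mem measurableSet_Ioc hf0)]

theorem ofReal_intervalIntegral_mul_sq_eq {w : ℝ → ℝ} {a b : ℝ} (ha : 0 ≤ a) (hab : a ≤ b)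
    (hw : ContinuousOn w (Icc a b)) :
    ENNReal.ofReal (∫ t in a..b, t * w t ^ 2) =
      ∫⁻ t in Ioc a b, ENNReal.ofReal t * ENNReal.ofReal (w t ^ 2) := by
  rw [ofReal_intervalIntegral_eq_setLIntegral (f := fun t => t * w t ^ 2) hab
    ((continuousOn_id.mul (hw.pow 2)).mono (uIcc_of_le hab).subset).intervalIntegrable
    fun t ht => mul_nonneg (ha.trans ht.1.le) (sq_nonneg _)]
  exact setLIntegral_congr_fun measurableSet_Ioc fun t ht => ENNReal.ofReal_mul (ha.trans ht.1.le)

theorem setLIntegral_Ioc_prod_ofReal_mul {a b : ℝ} (ha : 0 ≤ a) (hab : a ≤ b) (s : Set ℝ)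
    {g : ℝ → ℝ≥0∞} (hg : Measurable g) :
    ∫⁻ p in Ioc a b ×ˢ s, ENNReal.ofReal p.1 * g p.2 =
      ENNReal.ofReal ((b ^ 2 - a ^ 2) / 2) * ∫⁻ θ in s, g θ := by
  rw [Measure.volume_eq_prod, ← Measure.prod_restrict,
    lintegral_prod_mul (by fun_prop) hg.aemeasurable,
    ← ofReal_intervalIntegral_eq_setLIntegral hab intervalIntegral.intervalIntegrable_id
      fun t ht => ha.trans ht.1.le, integral_id]

theorem ofReal_setIntegral_sq_eq {X : Type*} [TopologicalSpace X] [T2Space X] [MeasurableSpace X]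
    [OpensMeasurableSpace X] {μ : Measure X} [IsFiniteMeasureOnCompacts μ] {s t : Set X}
    (ht : IsCompact t) (hst : s ⊆ t) {f : X → ℝ} (hf : ContinuousOn f t) :
    ENNReal.ofReal (∫ ξ in s, f ξ ^ 2 ∂μ) = ∫⁻ ξ in s, ENNReal.ofReal (f ξ ^ 2) ∂μ :=
  ofReal_integral_eq_lintegral_ofReal (((hf.pow 2).integrableOn_compact ht).mono_set hst)
    (ae_of_all _ fun _ => sq_nonneg _)

theorem IsCompact.le_biSup_of_continuousOn {X α : Type*} [TopologicalSpace X]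
    [ConditionallyCompleteLinearOrder α] [TopologicalSpace α] [OrderTopology α] {s : Set X}
    (hs : IsCompact s) {g : X → α} (hg : ContinuousOn g s) {ξ : X} (hξ : ξ ∈ s) :
    g ξ ≤ ⨆ η ∈ s, g η :=
  le_ciSup₂ (f := fun η (_ : η ∈ s) => g η)
    ((hs.bddAbove_image hg).mono (iUnion_subset fun _ => range_subset_iff.2 (mem_image_of_mem g)))
    ξ hξ

noncomputable def polarDir (θ : ℝ) : ℝ² := !₂[cos θ, sin θ]

noncomputable def polarPoint (x : ℝ²) (p : ℝ × ℝ) : ℝ² :=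
  x + p.1 • polarDir p.2

@[simp] lemma polarDir_apply_zero (θ : ℝ) : polarDir θ 0 = cos θ := rfl
@[simp] lemma polarDir_apply_one (θ : ℝ) : polarDir θ 1 = sin θ := rfl

lemma norm_polarDir (θ : ℝ) : ‖polarDir θ‖ = 1 := by
  simp [EuclideanSpace.norm_eq, Fin.sum_univ_two, polarDir]

lemma continuous_polarDir : Continuous polarDir := by
  unfold polarDir; fun_prop

lemma continuous_polarPoint (x : ℝ²) : Continuous (polarPoint x) :=
  continuous_const.add (continuous_fst.smul (continuous_polarDir.comp continuous_snd))

lemma norm_polarPoint_sub (x : ℝ²) (p : ℝ × ℝ) :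
    ‖polarPoint x p - x‖ = |p.1| := by
  simp [polarPoint, norm_smul, norm_polarDir]

lemma polarPoint_mem_quarterCone {x : ℝ²} {p : ℝ × ℝ} {r : ℝ}
    (hp : p.1 ∈ Icc 0 r) (hθ : p.2 ∈ Icc 0 (π / 2)) : polarPoint x p ∈ quarterCone x r := by
  refine ⟨by rw [norm_polarPoint_sub, abs_of_nonneg hp.1]; exact hp.2, ?_, ?_⟩
  · have := cos_nonneg_of_mem_Icc ⟨by linarith [hθ.1, pi_pos], hθ.2⟩
    simpa [polarPoint] using mul_nonneg hp.1 this
  · have := sin_nonneg_of_nonneg_of_le_pi hθ.1 (by linarith [hθ.2, pi_pos])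
    simpa [polarPoint] using mul_nonneg hp.1 this

lemma isClosed_quarterCone (x : ℝ²) (r : ℝ) :
    IsClosed (quarterCone x r) :=
  show IsClosed ({ξ | ‖ξ - x‖ ≤ r} ∩ ({ξ | x 0 ≤ ξ 0} ∩ {ξ | x 1 ≤ ξ 1})) from
  (isClosed_le (by fun_prop) continuous_const).inter
    ((isClosed_le continuous_const (by fun_prop)).inter
      (isClosed_le continuous_const (by fun_prop)))

lemma isCompact_quarterCone (x : ℝ²) (r : ℝ) :
    IsCompact (quarterCone x r) :=
  (isCompact_closedBall x r).of_isClosed_subset (isClosed_quarterCone x r)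
    fun ξ hξ => by simpa [dist_eq_norm] using hξ.1

lemma quarterCone_mono (x : ℝ²) {r r' : ℝ} (h : r ≤ r') :
    quarterCone x r ⊆ quarterCone x r' := fun _ hξ => ⟨hξ.1.trans h, hξ.2⟩

noncomputable def measurableEquivRealProd : ℝ² ≃ᵐ ℝ × ℝ :=
  (MeasurableEquiv.toLp 2 (Fin 2 → ℝ)).symm.trans MeasurableEquiv.finTwoArrow

lemma measurePreserving_measurableEquivRealProd :
    MeasurePreserving measurableEquivRealProd volume volume :=
  (volume_preserving_finTwoArrow ℝ).comp
    (EuclideanSpace.volume_preserving_symm_measurableEquiv_toLp (Fin 2))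

lemma polarPoint_eq (x : ℝ²) (p : ℝ × ℝ) :
    polarPoint x p = x + measurableEquivRealProd.symm (polarCoord.symm p) := by
  ext i; fin_cases i <;> simp [polarPoint, measurableEquivRealProd, polarCoord_symm_apply]

theorem setLIntegral_polarPoint_le {x : ℝ²} {s : Set (ℝ × ℝ)}
    {T : Set (ℝ²)} (hs : MeasurableSet s) (hs_target : s ⊆ polarCoord.target)
    (hT : MeasurableSet T) (hsT : MapsTo (polarPoint x) s T) (f : ℝ² → ℝ≥0∞) :
    ∫⁻ p in s, ENNReal.ofReal p.1 * f (polarPoint x p) ≤ ∫⁻ ξ in T, f ξ := by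
  -- extending `f` by zero off `T` lets the polar change of variables run over the whole plane
  let g : ℝ × ℝ → ℝ≥0∞ := fun q => T.indicator f (x + measurableEquivRealProd.symm q)
  calc ∫⁻ p in s, ENNReal.ofReal p.1 * f (polarPoint x p)
      = ∫⁻ p in s, ENNReal.ofReal p.1 • g (polarCoord.symm p) :=
        setLIntegral_congr_fun hs fun p hp => by
          simp only [g, smul_eq_mul, ← polarPoint_eq, indicator_of_mem (hsT hp)]
    _ ≤ ∫⁻ p in polarCoord.target, ENNReal.ofReal p.1 • g (polarCoord.symm p) :=
        lintegral_mono_set hs_target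
    _ = ∫⁻ q, g q := lintegral_comp_polarCoord_symm g
    _ = ∫⁻ ξ, T.indicator f (x + ξ) :=
        (measurePreserving_measurableEquivRealProd.symm _).lintegral_comp_emb
          measurableEquivRealProd.symm.measurableEmbedding (fun ξ => T.indicator f (x + ξ))
    _ = ∫⁻ ξ in T, f ξ := by rw [lintegral_add_left_eq_self, lintegral_indicator hT]

lemma Ioc_prod_Icc_subset_polarCoord_target {a b : ℝ} (ha : 0 ≤ a) :
    Ioc a b ×ˢ Icc 0 (π / 2) ⊆ polarCoord.target := fun p ⟨hr, hθ⟩ =>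
  ⟨ha.trans_lt hr.1, by linarith [hθ.1, pi_pos], by linarith [hθ.2, pi_pos]⟩

lemma mapsTo_polarPoint_quarterCone {x : ℝ²} {a b : ℝ} (ha : 0 ≤ a) :
    MapsTo (polarPoint x) (Ioc a b ×ˢ Icc 0 (π / 2)) (quarterCone x b) := fun _ hp =>
  polarPoint_mem_quarterCone ⟨ha.trans hp.1.1.le, hp.1.2⟩ hp.2

lemma mapsTo_polarPoint_quarterCone_diff {x : ℝ²} {a b : ℝ} (ha : 0 ≤ a) :
    MapsTo (polarPoint x) (Ioc a b ×ˢ Icc 0 (π / 2)) (quarterCone x b \ quarterCone x a) :=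
  fun p hp => ⟨mapsTo_polarPoint_quarterCone ha hp, fun h => by
    have := h.1
    rw [norm_polarPoint_sub, abs_of_pos (ha.trans_lt hp.1.1)] at this
    linarith [hp.1.1]⟩

theorem lintegral_lintegral_polarPoint_le {x : ℝ²} {a b : ℝ}
    {T : Set (ℝ²)} (ha : 0 ≤ a) (hT : MeasurableSet T)
    (hmaps : MapsTo (polarPoint x) (Ioc a b ×ˢ Icc 0 (π / 2)) T)
    {f : ℝ² → ℝ≥0∞} (hf : Measurable f) :
    ∫⁻ θ in Icc 0 (π / 2), ∫⁻ ρ in Ioc a b, ENNReal.ofReal ρ * f (polarPoint x (ρ, θ)) ≤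
      ∫⁻ ξ in T, f ξ := by
  calc ∫⁻ θ in Icc 0 (π / 2), ∫⁻ ρ in Ioc a b, ENNReal.ofReal ρ * f (polarPoint x (ρ, θ))
      = ∫⁻ p in Ioc a b ×ˢ Icc 0 (π / 2), ENNReal.ofReal p.1 * f (polarPoint x p) :=
        (setLIntegral_prod_symm (μ := volume) (ν := volume)
          (fun p : ℝ × ℝ => ENNReal.ofReal p.1 * f (polarPoint x p))
          (by have := (continuous_polarPoint x).measurable; fun_prop)).symm
    _ ≤ ∫⁻ ξ in T, f ξ :=
        setLIntegral_polarPoint_le (measurableSet_Ioc.prod measurableSet_Icc)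
          (Ioc_prod_Icc_subset_polarCoord_target ha) hT hmaps f

lemma continuousOn_fderiv_polarPoint {u : ℝ² → ℝ}
    {x : ℝ²} {R θ : ℝ} (hfd : ContinuousOn (fderiv ℝ u) (quarterCone x R))
    (hθ : θ ∈ Icc 0 (π / 2)) :
    ContinuousOn (fun ρ => fderiv ℝ u (polarPoint x (ρ, θ))) (Icc 0 R) :=
  hfd.comp ((continuous_polarPoint x).comp (by fun_prop)).continuousOn
    fun _ hρ => polarPoint_mem_quarterCone hρ hθ

theorem sq_le_along_ray {u : ℝ² → ℝ} {x : ℝ²}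
    {R ε r θ M : ℝ} (hd : ∀ ξ ∈ quarterCone x R, DifferentiableAt ℝ u ξ)
    (hfd : ContinuousOn (fderiv ℝ u) (quarterCone x R))
    (hε : 0 < ε) (hεr : ε ≤ r) (hrR : r ≤ R) (hθ : θ ∈ Icc 0 (π / 2))
    (hM : ∀ ξ ∈ quarterCone x ε, ‖fderiv ℝ u ξ‖ ≤ M) :
    u x ^ 2 ≤ 3 * (u (polarPoint x (r, θ)) ^ 2 + (ε * M) ^ 2 +
      log (R / ε) * ∫ ρ in ε..R, ρ * ‖fderiv ℝ u (polarPoint x (ρ, θ))‖ ^ 2) := by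
  set γ : ℝ → ℝ² := fun t => polarPoint x (t, θ) with hγ_def
  set v' : ℝ → ℝ := fun t => fderiv ℝ u (γ t) (polarDir θ)
  have hDγ : ContinuousOn (fun t => fderiv ℝ u (γ t)) (Icc 0 R) :=
    continuousOn_fderiv_polarPoint hfd hθ
  have hv' : ContinuousOn v' (Icc 0 R) := hDγ.clm_apply continuousOn_const
  have hv'_le : ∀ t, |v' t| ≤ ‖fderiv ℝ u (γ t)‖ := fun t => by
    simpa [norm_polarDir] using (fderiv ℝ u (γ t)).le_opNorm (polarDir θ)
  have hderiv : ∀ t ∈ Icc 0 r, HasDerivAt (fun t => u (γ t)) (v' t) t := fun t ht => by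
    have hγ' : HasDerivAt γ (polarDir θ) t := by
      simpa [hγ_def, polarPoint] using ((hasDerivAt_id t).smul_const (polarDir θ)).const_add x
    exact (hd _ (polarPoint_mem_quarterCone ⟨ht.1, ht.2.trans hrR⟩ hθ)).hasFDerivAt.comp_hasDerivAt
      t hγ'
  have hray := sq_apply_zero_le_of_hasDerivAt hε hεr hderiv (hv'.mono (Icc_subset_Icc le_rfl hrR))
    fun t ht => (hv'_le t).trans (hM _ (polarPoint_mem_quarterCone ht hθ))
  have henergy := log_div_mul_intervalIntegral_le hε hεr hrR
    (hv'.mono (Icc_subset_Icc hε.le le_rfl)) (hDγ.norm.mono (Icc_subset_Icc hε.le le_rfl))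
    fun t _ => hv'_le t
  have hγ0 : γ 0 = x := by simp [hγ_def, polarPoint]
  rw [hγ0] at hray
  linarith

theorem ofReal_mul_sq_le_along_ray {u : ℝ² → ℝ} {x : ℝ²}
    {R ε r θ M : ℝ} (hd : ∀ ξ ∈ quarterCone x R, DifferentiableAt ℝ u ξ)
    (hfd : ContinuousOn (fderiv ℝ u) (quarterCone x R))
    (hε : 0 < ε) (hεr : ε ≤ r) (hrR : r ≤ R) (hθ : θ ∈ Icc 0 (π / 2))
    (hM : ∀ ξ ∈ quarterCone x ε, ‖fderiv ℝ u ξ‖ ≤ M) :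
    ENNReal.ofReal r * ENNReal.ofReal (u x ^ 2) ≤
      3 * (ENNReal.ofReal r * ENNReal.ofReal (u (polarPoint x (r, θ)) ^ 2) +
        ENNReal.ofReal ((ε * M) ^ 2) * ENNReal.ofReal r +
        ENNReal.ofReal (log (R / ε)) * (ENNReal.ofReal r * ∫⁻ ρ in Ioc ε R,
          ENNReal.ofReal ρ * ENNReal.ofReal (‖fderiv ℝ u (polarPoint x (ρ, θ))‖ ^ 2))) := by
  set L := ∫ ρ in ε..R, ρ * ‖fderiv ℝ u (polarPoint x (ρ, θ))‖ ^ 2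
  have hK : 0 ≤ log (R / ε) := log_nonneg ((one_le_div hε).2 (hεr.trans hrR))
  have hL0 : 0 ≤ L := intervalIntegral.integral_nonneg (hεr.trans hrR) fun ρ hρ =>
    mul_nonneg (hε.le.trans hρ.1) (sq_nonneg _)
  calc ENNReal.ofReal r * ENNReal.ofReal (u x ^ 2)
      ≤ ENNReal.ofReal r * ENNReal.ofReal
          (3 * (u (polarPoint x (r, θ)) ^ 2 + (ε * M) ^ 2 + log (R / ε) * L)) := by
        gcongr
        exact sq_le_along_ray hd hfd hε hεr hrR hθ hM
    _ = _ := by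
        rw [ENNReal.ofReal_mul (p := 3) (by norm_num),
          ENNReal.ofReal_add (by positivity) (mul_nonneg hK hL0),
          ENNReal.ofReal_add (by positivity) (by positivity), ENNReal.ofReal_mul hK,
          ofReal_intervalIntegral_mul_sq_eq hε.le (hεr.trans hrR)
            ((continuousOn_fderiv_polarPoint hfd hθ).norm.mono (Icc_subset_Icc hε.le le_rfl)),
          ENNReal.ofReal_ofNat]
        ring

theorem ofReal_sq_mul_le_quarterCone {u : ℝ² → ℝ} {x : ℝ²}
    {ε M : ℝ} (hu : Continuous u) (hd : ∀ ξ ∈ quarterCone x (1 / 2), DifferentiableAt ℝ u ξ)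
    (hfd : ContinuousOn (fderiv ℝ u) (quarterCone x (1 / 2))) (hε : 0 < ε) (hε4 : ε ≤ 1 / 4)
    (hM : ∀ ξ ∈ quarterCone x ε, ‖fderiv ℝ u ξ‖ ≤ M) :
    ENNReal.ofReal (u x ^ 2) * ENNReal.ofReal (3 / 32 * (π / 2)) ≤
      3 * (ENNReal.ofReal (∫ ξ in quarterCone x (1 / 2) \ quarterCone x (1 / 4), u ξ ^ 2) +
        ENNReal.ofReal ((ε * M) ^ 2) * ENNReal.ofReal (3 / 32 * (π / 2)) +
        ENNReal.ofReal (log (1 / 2 / ε)) * (ENNReal.ofReal (3 / 32) *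
          ENNReal.ofReal (∫ ξ in quarterCone x (1 / 2), ‖fderiv ℝ u ξ‖ ^ 2))) := by
  set K := log (1 / 2 / ε)
  set Q := Ioc (1 / 4 : ℝ) (1 / 2) ×ˢ Icc 0 (π / 2)
  set G : ℝ → ℝ≥0∞ := fun θ => ∫⁻ ρ in Ioc ε (1 / 2),
    ENNReal.ofReal ρ * ENNReal.ofReal (‖fderiv ℝ u (polarPoint x (ρ, θ))‖ ^ 2)
  have hQ : MeasurableSet Q := measurableSet_Ioc.prod measurableSet_Icc
  have hcone : ∀ r, MeasurableSet (quarterCone x r) := fun r =>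
    (isClosed_quarterCone x r).measurableSet
  have hmeas := (continuous_polarPoint x).measurable
  have hDu := measurable_fderiv ℝ u
  have hprod : ∀ g : ℝ → ℝ≥0∞, Measurable g → ∫⁻ p in Q, ENNReal.ofReal p.1 * g p.2 =
      ENNReal.ofReal (3 / 32) * ∫⁻ θ in Icc 0 (π / 2), g θ := fun g hg => by
    rw [setLIntegral_Ioc_prod_ofReal_mul (by norm_num) (by norm_num) _ hg]
    norm_num
  have hW : ∫⁻ p in Q, ENNReal.ofReal p.1 = ENNReal.ofReal (3 / 32 * (π / 2)) := by
    rw [ENNReal.ofReal_mul (by norm_num)]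
    simpa [Real.volume_Icc] using hprod (fun _ => 1) measurable_const
  have hG : Measurable G := Measurable.lintegral_prod_right' (f := fun q : ℝ × ℝ =>
    ENNReal.ofReal q.2 * ENNReal.ofReal (‖fderiv ℝ u (polarPoint x (q.2, q.1))‖ ^ 2)) (by fun_prop)
  calc ENNReal.ofReal (u x ^ 2) * ENNReal.ofReal (3 / 32 * (π / 2))
      = ∫⁻ p in Q, ENNReal.ofReal p.1 * ENNReal.ofReal (u x ^ 2) := by
        rw [lintegral_mul_const' _ _ ENNReal.ofReal_ne_top, hW, mul_comm]
    _ ≤ ∫⁻ p in Q, 3 * (ENNReal.ofReal p.1 * ENNReal.ofReal (u (polarPoint x p) ^ 2) +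
        ENNReal.ofReal ((ε * M) ^ 2) * ENNReal.ofReal p.1 +
        ENNReal.ofReal K * (ENNReal.ofReal p.1 * G p.2)) := setLIntegral_mono' hQ fun p hp =>
          ofReal_mul_sq_le_along_ray hd hfd hε (by linarith [hp.1.1]) hp.1.2 hp.2 hM
    _ = 3 * ((∫⁻ p in Q, ENNReal.ofReal p.1 * ENNReal.ofReal (u (polarPoint x p) ^ 2)) +
        ENNReal.ofReal ((ε * M) ^ 2) * (∫⁻ p in Q, ENNReal.ofReal p.1) +
        ENNReal.ofReal K * ∫⁻ p in Q, ENNReal.ofReal p.1 * G p.2) := by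
        rw [lintegral_const_mul' _ _ ENNReal.ofNat_ne_top, lintegral_add_left (by fun_prop),
          lintegral_add_left (by fun_prop), lintegral_const_mul' _ _ ENNReal.ofReal_ne_top,
          lintegral_const_mul' _ _ ENNReal.ofReal_ne_top]
    _ ≤ _ := by
        rw [hW, hprod G hG,
          ofReal_setIntegral_sq_eq (isCompact_quarterCone x (1 / 2)) sdiff_subset hu.continuousOn,
          ofReal_setIntegral_sq_eq (isCompact_quarterCone x (1 / 2)) subset_rfl hfd.norm]
        gcongr
        · exact setLIntegral_polarPoint_le hQ (Ioc_prod_Icc_subset_polarCoord_target (by norm_num))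
            ((hcone _).diff (hcone _)) (mapsTo_polarPoint_quarterCone_diff (by norm_num)) _
        · exact lintegral_lintegral_polarPoint_le hε.le (hcone _)
            (mapsTo_polarPoint_quarterCone hε.le) (by fun_prop)

theorem sq_le_quarterCone {u : ℝ² → ℝ} {x : ℝ²}
    {ε M : ℝ} (hu : Continuous u) (hd : ∀ ξ ∈ quarterCone x (1 / 2), DifferentiableAt ℝ u ξ)
    (hfd : ContinuousOn (fderiv ℝ u) (quarterCone x (1 / 2))) (hε : 0 < ε) (hε4 : ε ≤ 1 / 4)
    (hM : ∀ ξ ∈ quarterCone x ε, ‖fderiv ℝ u ξ‖ ≤ M) :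
    u x ^ 2 ≤ 22 * ((∫ ξ in quarterCone x (1 / 2) \ quarterCone x (1 / 4), u ξ ^ 2) +
      ε ^ 2 * M ^ 2 + (-log ε) * ∫ ξ in quarterCone x (1 / 2), ‖fderiv ℝ u ξ‖ ^ 2) := by
  set A := ∫ ξ in quarterCone x (1 / 2) \ quarterCone x (1 / 4), u ξ ^ 2
  set D := ∫ ξ in quarterCone x (1 / 2), ‖fderiv ℝ u ξ‖ ^ 2
  have hcone : ∀ r, MeasurableSet (quarterCone x r) := fun r =>
    (isClosed_quarterCone x r).measurableSet
  have hA : 0 ≤ A := setIntegral_nonneg ((hcone _).diff (hcone _)) fun _ _ => sq_nonneg _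
  have hD : 0 ≤ D := setIntegral_nonneg (hcone _) fun _ _ => sq_nonneg _
  have hK : 0 ≤ log (1 / 2 / ε) := log_nonneg (by rw [le_div_iff₀ hε]; linarith)
  have hlog : log (1 / 2 / ε) ≤ -log ε := by
    rw [log_div (by norm_num) hε.ne']
    linarith [log_nonpos (by norm_num : (0 : ℝ) ≤ 1 / 2) (by norm_num)]
  have hbound : u x ^ 2 * (3 / 32 * (π / 2)) ≤
      3 * (A + (ε * M) ^ 2 * (3 / 32 * (π / 2)) + log (1 / 2 / ε) * (3 / 32 * D)) := by
    have h := ofReal_sq_mul_le_quarterCone hu hd hfd hε hε4 hM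
    rwa [← ENNReal.ofReal_mul (sq_nonneg _), ← ENNReal.ofReal_mul (p := 3 / 32) (by norm_num),
      ← ENNReal.ofReal_mul hK, ← ENNReal.ofReal_mul (sq_nonneg _),
      ← ENNReal.ofReal_add hA (by positivity), ← ENNReal.ofReal_add (by positivity) (by positivity),
      ← ENNReal.ofReal_ofNat, ← ENNReal.ofReal_mul (by norm_num),
      ENNReal.ofReal_le_ofReal_iff (by positivity)] at h
  -- `3π/64` is the `r dr dθ`-area of the averaging rectangle, and `64 / π < 22`
  have hW : (9 / 64 : ℝ) < 3 / 32 * (π / 2) := by linarith [pi_gt_three]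
  refine le_of_mul_le_mul_right ?_ (by positivity : (0 : ℝ) < 3 / 32 * (π / 2))
  nlinarith [mul_le_mul_of_nonneg_right hlog hD, mul_nonneg (hK.trans hlog) hD, mul_pow ε M 2,
    mul_le_mul_of_nonneg_left hW.le (add_nonneg (add_nonneg hA (sq_nonneg (ε * M)))
      (mul_nonneg (hK.trans hlog) hD))]

/-- point-evaluation estimate via the cone argument:
`u(x)² ≤ c (‖u‖²_{L₂(C_{1/2}\C_{1/4})} + ε² ‖∇u‖²_{L∞(C_ε)} + (-log ε)|u|²_{H¹(C_{1/2})})`. -/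
theorem stmt_14 : ∃ c : ℝ, 0 < c ∧
    ∀ (u : EuclideanSpace ℝ (Fin 2) → ℝ) (x : EuclideanSpace ℝ (Fin 2)),
      x 0 ∈ Set.Icc (0:ℝ) (1/2) → x 1 ∈ Set.Icc (0:ℝ) (1/2) →
      Continuous u →
      (∀ ξ ∈ quarterCone x (1/2), DifferentiableAt ℝ u ξ) →
      ContinuousOn (fderiv ℝ u) (quarterCone x (1/2)) →
      IntegrableOn (fun ξ => ‖fderiv ℝ u ξ‖ ^ 2) (quarterCone x (1/2)) →
      ∀ ε : ℝ, 0 < ε → ε < 1/4 →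
        (u x) ^ 2 ≤ c *
          ((∫ ξ in quarterCone x (1/2) \ quarterCone x (1/4), (u ξ) ^ 2) +
           ε ^ 2 * (⨆ ξ ∈ quarterCone x ε, ‖fderiv ℝ u ξ‖) ^ 2 +
           (-Real.log ε) * ∫ ξ in quarterCone x (1/2), ‖fderiv ℝ u ξ‖ ^ 2) := by
  refine ⟨22, by norm_num, fun u x _ _ hu hd hfd _ ε hε hε4 => ?_⟩
  exact sq_le_quarterCone hu hd hfd hε hε4.le fun _ hξ =>
    (isCompact_quarterCone x ε).le_biSup_of_continuousOn
      (hfd.mono (quarterCone_mono x (by linarith))).norm hξ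
end
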